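/- The matrix Okubo product is flexible: for all 3×3 complex matrices x, y with xᴴ = x, yᴴ = y, and trace x = trace y = 0, one has x * (y * x) = (x * y) * x. -/
import Mathlib


noncomputable section

open Matrix

/-- `μ = (3 + i√3)/6`. -/
def okMu : ℂ := (3 + Complex.I * Real.sqrt 3) / 6

/-- The matrix Okubo product
`x * y = μ·(xy) + (conj μ)·(yx) − (1/3)(trace(xy))·1` on 3×3 complex matrices. -/
def okmulM (x y : Matrix (Fin 3) (Fin 3) ℂ) : Matrix (Fin 3) (Fin 3) ℂ :=
  okMu • (x * y) + (starRingEnd ℂ okMu) • (y * x) -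
    ((1 / 3 : ℂ) * Matrix.trace (x * y)) • (1 : Matrix (Fin 3) (Fin 3) ℂ)

/-- the matrix Okubo product is flexible on traceless Hermitian
matrices: `x * (y * x) = (x * y) * x`. -/
theorem okubo_matrix_flexible
    (x y : Matrix (Fin 3) (Fin 3) ℂ)
    (hx : xᴴ = x) (hy : yᴴ = y)
    (htx : Matrix.trace x = 0) (hty : Matrix.trace y = 0) :
    okmulM x (okmulM y x) = okmulM (okmulM x y) x := by
  simp only [okmulM, Matrix.mul_add, Matrix.add_mul, Matrix.mul_sub, Matrix.sub_mul,
    Matrix.mul_smul, Matrix.smul_mul, Matrix.mul_one, Matrix.one_mul,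
    trace_add, trace_sub, trace_smul, trace_one, smul_smul, trace_mul_comm x y,
    ← Matrix.mul_assoc, htx]
  rw [show x*x*y = x*(x*y) from Matrix.mul_assoc .., trace_mul_comm x (x*y),
    trace_mul_comm (y*x) x]
  simp only [← Matrix.mul_assoc]
  module

end
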